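/- Let G=(V,E) be a finite connected simple graph, let x ∈ V, and let a, b be vertices of G/x (i.e., a, b ∈ V \ N(x)). Then d_{G/x}(a,b) ≥ d_G(a,b) − 2. -/

import Mathlib

open SimpleGraph

noncomputable def eccentr {V : Type} (G : SimpleGraph V) (x : V) : ℕ :=
  sSup (Set.range (G.dist x))

noncomputable def grRadius {V : Type} (G : SimpleGraph V) : ℕ :=
  sInf (Set.range (eccentr G))

def ncontract {V : Type} (G : SimpleGraph V) (x : V) :
    SimpleGraph {v : V // ¬ G.Adj x v} where
  Adj a b := G.Adj a.1 b.1 ∨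
    (a.1 = x ∧ b.1 ≠ x ∧ ∃ y, G.Adj x y ∧ G.Adj y b.1) ∨
    (b.1 = x ∧ a.1 ≠ x ∧ ∃ y, G.Adj x y ∧ G.Adj y a.1)
  symm := ⟨fun a b h => by
    rcases h with h | h | h
    · exact Or.inl h.symm
    · exact Or.inr (Or.inr h)
    · exact Or.inr (Or.inl h)⟩
  loopless := ⟨fun a h => by
    rcases h with h | ⟨h1, h2, -⟩ | ⟨h1, h2, -⟩
    · exact G.loopless.irrefl _ h
    · exact h2 h1
    · exact h2 h1⟩

/-!
The map `V → V/x` collapsing `N(x)` onto `x` sends edges of `G` to edges or loops of `G/x`,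
so `G/x` is connected. Conversely, an edge of `G/x` is an edge of `G` unless it is incident to
`x`, in which case it lifts to a path of length two through `N(x)`. A geodesic of `G/x` is a
path, so it meets `x` at most once and uses at most two edges at `x`; lifting it edge by edge
gives a walk in `G` at most two steps longer.
-/

section NeighborhoodContraction

variable {V : Type} (G : SimpleGraph V) (x : V)

def ncontractCenter : {v : V // ¬ G.Adj x v} :=
  ⟨x, G.irrefl⟩

def ncontractRetract [DecidableRel G.Adj] (v : V) : {v : V // ¬ G.Adj x v} :=
  if h : G.Adj x v then ncontractCenter G x else ⟨v, h⟩

variable {G x}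

lemma ncontract_reachable_retract_of_adj [DecidableRel G.Adj] {u w : V} (h : G.Adj u w) :
    (ncontract G x).Reachable (ncontractRetract G x u) (ncontractRetract G x w) := by
  unfold ncontractRetract
  by_cases hu : G.Adj x u <;> by_cases hw : G.Adj x w <;> simp only [hu, hw, dite_true, dite_false]
  · rfl
  · by_cases hwx : w = x
    · subst hwx; rfl
    · exact Adj.reachable (Or.inr (Or.inl ⟨rfl, hwx, u, hu, h⟩))
  · by_cases hux : u = x
    · subst hux; rfl
    · exact Adj.reachable (Or.inr (Or.inr ⟨rfl, hux, w, hw, h.symm⟩))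
  · exact Adj.reachable (Or.inl h)

lemma ncontract_preconnected (hG : G.Preconnected) : (ncontract G x).Preconnected := by
  classical
  have hretract : ∀ v : {v : V // ¬ G.Adj x v}, ncontractRetract G x v.1 = v :=
    fun v => dif_neg v.2
  have hlift : ∀ {u w : V}, G.Walk u w →
      (ncontract G x).Reachable (ncontractRetract G x u) (ncontractRetract G x w) := by
    intro u w p
    induction p with
    | nil => rfl
    | cons h _ ih => exact (ncontract_reachable_retract_of_adj h).trans ih
  intro a b
  simpa only [hretract] using hlift (hG a b).some

variable [DecidableEq V]

lemma exists_walk_of_ncontract_adj {u v : {v : V // ¬ G.Adj x v}} (h : (ncontract G x).Adj u v) :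
    ∃ p : G.Walk u.1 v.1, p.length ≤ 1 + (if u = ncontractCenter G x then 1 else 0) +
      (if v = ncontractCenter G x then 1 else 0) := by
  rcases h with h | ⟨hu, -, y, hxy, hyv⟩ | ⟨hv, -, y, hxy, hyu⟩
  · exact ⟨h.toWalk, by split_ifs <;> simp⟩
  · obtain rfl : u = ncontractCenter G x := Subtype.ext hu
    exact ⟨.cons hxy hyv.toWalk, by simp [ncontractCenter]⟩
  · obtain rfl : v = ncontractCenter G x := Subtype.ext hv
    exact ⟨.cons hyu.symm hxy.symm.toWalk, by simp [ncontractCenter]⟩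

/-- The two endpoint terms on the left make the bound inductive: an edge at `x` costs one extra
step, which is charged to the occurrence of `x` at either end of that edge. -/
lemma exists_walk_of_ncontract_walk {u v : {v : V // ¬ G.Adj x v}} (W : (ncontract G x).Walk u v) :
    ∃ p : G.Walk u.1 v.1, p.length + (if u = ncontractCenter G x then 1 else 0) +
      (if v = ncontractCenter G x then 1 else 0) ≤
        W.length + 2 * W.support.count (ncontractCenter G x) := by
  induction W with
  | nil => exact ⟨.nil, by split_ifs <;> simp_all⟩
  | @cons u c w h W ih =>
    obtain ⟨q, hq⟩ := exists_walk_of_ncontract_adj h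
    obtain ⟨p, hp⟩ := ih
    have hc : (if c = ncontractCenter G x then 1 else 0) ≤
        W.support.count (ncontractCenter G x) := by
      split_ifs with hc
      · exact List.count_pos_iff.2 (hc ▸ W.start_mem_support)
      · exact Nat.zero_le _
    refine ⟨q.append p, ?_⟩
    simp only [Walk.length_append, Walk.length_cons, Walk.support_cons, List.count_cons,
      beq_iff_eq] at hq hp hc ⊢
    split_ifs at hq hp hc ⊢ <;> omega

end NeighborhoodContraction

theorem stmt_5 {V : Type} (G : SimpleGraph V) (hconn : G.Connected)
    (x a b : V) (ha : ¬ G.Adj x a) (hb : ¬ G.Adj x b) :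
    G.dist a b ≤ (ncontract G x).dist ⟨a, ha⟩ ⟨b, hb⟩ + 2 := by
  classical
  obtain ⟨P, hPpath, hPlen⟩ :=
    (ncontract_preconnected hconn.preconnected ⟨a, ha⟩ ⟨b, hb⟩).exists_path_of_dist
  obtain ⟨p, hp⟩ := exists_walk_of_ncontract_walk P
  have hcount := List.nodup_iff_count_le_one.1 hPpath.support_nodup (ncontractCenter G x)
  have hdist : G.dist a b ≤ p.length := dist_le p
  split_ifs at hp <;> omega
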